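/- Let d : (0,∞) → (−∞,0] be a nonincreasing function such that the function f(ℓ) := d(ℓ)/ℓ² is bounded on (0,∞). Suppose there exist constants C > 0 and ℓ₀ > 0 such that f(nℓ) ≥ f(ℓ) − C/ℓ for all positive integers n and all ℓ ≥ ℓ₀. Then f(ℓ) converges to a finite limit A as ℓ → ∞, and moreover f(ℓ) ≤ A + 2C/ℓ for all ℓ ≥ 2ℓ₀. -/

import Mathlib

/-!
Put `A := sup_{ℓ ≥ ℓ₀} (f ℓ - C / ℓ)`, which is finite because `d ≤ 0`; this gives
`f ℓ ≤ A + C / ℓ` outright. Conversely, fix `ℓ ≥ ℓ₀` with `y := f ℓ - C / ℓ` close to `A`, so that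
`f (m ℓ) ≥ y` for every `m ≥ 1`. Rounding a large `L` up to a multiple `m ℓ ∈ [L, L + ℓ]`,
monotonicity of `d` and `y ≤ 0` give `f L ≥ y (1 + ℓ / L) ^ 2`, which tends to `y`.
-/

open Filter Set Topology

lemma exists_nat_mul_mem_Icc {ℓ L : ℝ} (hℓ : 0 < ℓ) (hL : 0 < L) :
    ∃ m : ℕ, 0 < m ∧ L ≤ m * ℓ ∧ m * ℓ ≤ L + ℓ := by
  have hLℓ : 0 < L / ℓ := div_pos hL hℓ
  refine ⟨⌈L / ℓ⌉₊, Nat.ceil_pos.mpr hLℓ, (div_le_iff₀ hℓ).mp (Nat.le_ceil _), ?_⟩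
  have := (Nat.ceil_lt_add_one hLℓ.le).le
  calc (⌈L / ℓ⌉₊ : ℝ) * ℓ ≤ (L / ℓ + 1) * ℓ := by gcongr
    _ = L + ℓ := by field_simp

section AntitoneOn

variable {d : ℝ → ℝ} {ℓ y : ℝ}

lemma mul_one_add_div_sq_le_div_sq (hd : AntitoneOn d (Ioi 0)) (hℓ : 0 < ℓ) (hy : y ≤ 0)
    (h : ∀ m : ℕ, 0 < m → y ≤ d (m * ℓ) / (m * ℓ) ^ 2) {L : ℝ} (hL : 0 < L) :
    y * (1 + ℓ / L) ^ 2 ≤ d L / L ^ 2 := by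
  obtain ⟨m, hm, hLm, hmL⟩ := exists_nat_mul_mem_Icc hℓ hL
  have hmℓ : 0 < (m : ℝ) * ℓ := hL.trans_le hLm
  have hdL : y * (L + ℓ) ^ 2 ≤ d L :=
    calc y * (L + ℓ) ^ 2 ≤ y * (m * ℓ) ^ 2 := mul_le_mul_of_nonpos_left (by gcongr) hy
      _ ≤ d (m * ℓ) := (le_div_iff₀ (by positivity)).mp (h m hm)
      _ ≤ d L := hd hL hmℓ hLm
  calc y * (1 + ℓ / L) ^ 2 = y * (L + ℓ) ^ 2 / L ^ 2 := by field_simp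
    _ ≤ d L / L ^ 2 := by gcongr

lemma eventually_lt_div_sq (hd : AntitoneOn d (Ioi 0)) (hℓ : 0 < ℓ) (hy : y ≤ 0)
    (h : ∀ m : ℕ, 0 < m → y ≤ d (m * ℓ) / (m * ℓ) ^ 2) {a : ℝ} (ha : a < y) :
    ∀ᶠ L in atTop, a < d L / L ^ 2 := by
  have hlim : Tendsto (fun L => y * (1 + ℓ / L) ^ 2) atTop (𝓝 y) := by
    simpa using (((tendsto_const_nhds (x := (1 : ℝ))).add
      ((tendsto_const_nhds (x := ℓ)).div_atTop tendsto_id)).pow 2).const_mul y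
  filter_upwards [hlim.eventually (lt_mem_nhds ha), eventually_gt_atTop 0] with L haL hL
  exact haL.trans_le (mul_one_add_div_sq_le_div_sq hd hℓ hy h hL)

end AntitoneOn

theorem stmt_1_general (d : ℝ → ℝ)
    (hmono : AntitoneOn d (Ioi 0))
    (hneg : ∀ ℓ ∈ Ioi (0:ℝ), d ℓ ≤ 0)
    (C ℓ₀ : ℝ) (hC : 0 < C) (hℓ₀ : 0 < ℓ₀)
    (hyp : ∀ n : ℕ, 0 < n → ∀ ℓ : ℝ, ℓ₀ ≤ ℓ →
      d ((n : ℝ) * ℓ) / ((n : ℝ) * ℓ) ^ 2 ≥ d ℓ / ℓ ^ 2 - C / ℓ) :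
    ∃ A : ℝ,
      Tendsto (fun ℓ : ℝ => d ℓ / ℓ ^ 2) atTop (nhds A) ∧
      ∀ ℓ : ℝ, 2 * ℓ₀ ≤ ℓ → d ℓ / ℓ ^ 2 ≤ A + 2 * C / ℓ := by
  set g : ℝ → ℝ := fun ℓ => d ℓ / ℓ ^ 2 - C / ℓ
  have hg_nonpos : ∀ ℓ ∈ Ici ℓ₀, g ℓ ≤ 0 := fun ℓ hℓ => by
    have hℓ : 0 < ℓ := hℓ₀.trans_le hℓ
    have : d ℓ / ℓ ^ 2 ≤ 0 := div_nonpos_of_nonpos_of_nonneg (hneg ℓ hℓ) (sq_nonneg ℓ)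
    have : 0 ≤ C / ℓ := by positivity
    linarith
  have hbdd : BddAbove (g '' Ici ℓ₀) := ⟨0, forall_mem_image.mpr hg_nonpos⟩
  set A := sSup (g '' Ici ℓ₀)
  have hle : ∀ ℓ, ℓ₀ ≤ ℓ → d ℓ / ℓ ^ 2 ≤ A + C / ℓ := fun ℓ hℓ => by
    have := le_csSup hbdd (mem_image_of_mem g (mem_Ici.mpr hℓ))
    linarith
  refine ⟨A, tendsto_order.mpr ⟨fun a ha => ?_, fun b hb => ?_⟩, fun ℓ hℓ => ?_⟩
  · obtain ⟨_, ⟨ℓ, hℓ, rfl⟩, hlt⟩ := exists_lt_of_lt_csSup (nonempty_Ici.image g) ha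
    exact eventually_lt_div_sq hmono (hℓ₀.trans_le hℓ) (hg_nonpos ℓ hℓ)
      (fun m hm => hyp m hm ℓ hℓ) hlt
  · have hlim : Tendsto (fun ℓ => A + C / ℓ) atTop (𝓝 A) := by
      simpa using (tendsto_const_nhds (x := A)).add
        ((tendsto_const_nhds (x := C)).div_atTop tendsto_id)
    filter_upwards [hlim.eventually (gt_mem_nhds hb), eventually_ge_atTop ℓ₀] with ℓ hb hℓ
    exact (hle ℓ hℓ).trans_lt hb
  · have hℓ' : 0 < ℓ := by linarith
    have : C / ℓ ≤ 2 * C / ℓ := by gcongr; linarith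
    linarith [hle ℓ (by linarith)]

/-- Lemma 2.2(2): abstract subadditivity lemma with error `C/ℓ`. -/
theorem stmt_1 (d : ℝ → ℝ)
    (hmono : AntitoneOn d (Ioi 0))
    (hneg : ∀ ℓ ∈ Ioi (0:ℝ), d ℓ ≤ 0)
    (hbdd : ∃ M : ℝ, ∀ ℓ ∈ Ioi (0:ℝ), |d ℓ / ℓ ^ 2| ≤ M)
    (C ℓ₀ : ℝ) (hC : 0 < C) (hℓ₀ : 0 < ℓ₀)
    (hyp : ∀ n : ℕ, 0 < n → ∀ ℓ : ℝ, ℓ₀ ≤ ℓ →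
      d ((n : ℝ) * ℓ) / ((n : ℝ) * ℓ) ^ 2 ≥ d ℓ / ℓ ^ 2 - C / ℓ) :
    ∃ A : ℝ,
      Tendsto (fun ℓ : ℝ => d ℓ / ℓ ^ 2) atTop (nhds A) ∧
      ∀ ℓ : ℝ, 2 * ℓ₀ ≤ ℓ → d ℓ / ℓ ^ 2 ≤ A + 2 * C / ℓ :=
  stmt_1_general d hmono hneg C ℓ₀ hC hℓ₀ hyp
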